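/- If a Lloyd-Topor program Π is tight, then the second-order sentence SM[Π] is logically equivalent to the first-order sentence Comp[Π] (Proposition 1). -/
import Mathlib


/- ## First-order logic with named variables -/

namespace LT

/-- A first-order signature: function symbols and predicate symbols with arities. -/
structure Signature where
  Func : Type
  fnArity : Func → ℕ
  Pred : Type
  prArity : Pred → ℕ

/-- First-order terms (variables are natural numbers). -/
inductive Term (σ : Signature) : Type
  | var : ℕ → Term σ
  | func (f : σ.Func) (args : Fin (σ.fnArity f) → Term σ) : Term σ

/-- First-order formulas built from ⊥, atoms, equality, ∧, ∨, →, ∀, ∃. -/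
inductive Fml (σ : Signature) : Type
  | falsum : Fml σ
  | atom (p : σ.Pred) (args : Fin (σ.prArity p) → Term σ) : Fml σ
  | eq (t₁ t₂ : Term σ) : Fml σ
  | and (F G : Fml σ) : Fml σ
  | or (F G : Fml σ) : Fml σ
  | imp (F G : Fml σ) : Fml σ
  | all (n : ℕ) (F : Fml σ) : Fml σ
  | ex (n : ℕ) (F : Fml σ) : Fml σ

variable {σ : Signature}

/-- ¬F is an abbreviation for F → ⊥. -/
def Fml.not (F : Fml σ) : Fml σ := F.imp .falsum

/-- ⊤ stands for ⊥ → ⊥. -/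
def Fml.verum : Fml σ := Fml.not .falsum

/-- F ↔ G stands for (F → G) ∧ (G → F). -/
def Fml.iff (F G : Fml σ) : Fml σ := (F.imp G).and (G.imp F)

/-- A ground atom over a universe `U`: a predicate symbol with a tuple of
universe elements as arguments. -/
abbrev GAtom (σ : Signature) (U : Type) := Σ p : σ.Pred, Fin (σ.prArity p) → U

/-- A first-order interpretation. -/
structure Interp (σ : Signature) where
  U : Type
  nonempty : Nonempty U
  fn (f : σ.Func) : (Fin (σ.fnArity f) → U) → U
  rel : GAtom σ U → Prop

/-- Value of a term under an interpretation and an assignment of variables. -/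
def Term.eval (I : Interp σ) (v : ℕ → I.U) : Term σ → I.U
  | .var n => v n
  | .func f ts => I.fn f fun i => (ts i).eval I v

/-- Tarskian satisfaction. -/
def Fml.Sat (I : Interp σ) (v : ℕ → I.U) : Fml σ → Prop
  | .falsum => False
  | .atom p ts => I.rel ⟨p, fun i => (ts i).eval I v⟩
  | .eq t₁ t₂ => t₁.eval I v = t₂.eval I v
  | .and F G => F.Sat I v ∧ G.Sat I v
  | .or F G => F.Sat I v ∨ G.Sat I v
  | .imp F G => F.Sat I v → G.Sat I v
  | .all n F => ∀ d : I.U, F.Sat I (Function.update v n d)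
  | .ex n F => ∃ d : I.U, F.Sat I (Function.update v n d)

/-- `I` satisfies (the universal closure of) every formula in `Γ`. -/
def Interp.satAll (I : Interp σ) (Γ : Set (Fml σ)) : Prop :=
  ∀ F ∈ Γ, ∀ v : ℕ → I.U, F.Sat I v

/-- The predicate symbols occurring in a formula. -/
def Fml.hasPred : Fml σ → σ.Pred → Prop
  | .falsum, _ => False
  | .atom p _, q => p = q
  | .eq _ _, _ => False
  | .and F G, q => F.hasPred q ∨ G.hasPred q
  | .or F G, q => F.hasPred q ∨ G.hasPred q
  | .imp F G, q => F.hasPred q ∨ G.hasPred q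
  | .all _ F, q => F.hasPred q
  | .ex _ F, q => F.hasPred q

/- ## Lloyd-Topor programs, completion -/

/-- A Lloyd-Topor rule  p(t) ← G. -/
structure Rule (σ : Signature) where
  head : σ.Pred
  args : Fin (σ.prArity head) → Term σ
  body : Fml σ

/-- The rule p(t) ← G read as the formula G → p(t)
(its universal closure is implicit in satisfaction). -/
def Rule.fml (R : Rule σ) : Fml σ := R.body.imp (.atom R.head R.args)

/-- The ground atom obtained by evaluating the head of a rule. -/
def Rule.headEval (R : Rule σ) (I : Interp σ) (v : ℕ → I.U) : GAtom σ I.U :=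
  ⟨R.head, fun i => (R.args i).eval I v⟩

/-- The predicate constants occurring in a program. -/
def progPreds (Pr : List (Rule σ)) : Set σ.Pred :=
  {p | ∃ R ∈ Pr, R.fml.hasPred p}

/-- `I` satisfies the program `Pr`, i.e. the conjunction of the universal
closures of G → p(t) over all rules p(t) ← G of Pr. -/
def Interp.satProg (I : Interp σ) (Pr : List (Rule σ)) : Prop :=
  ∀ R ∈ Pr, ∀ v : ℕ → I.U, R.fml.Sat I v

/-- `I` satisfies Comp[Pr], the conjunction of the completed definitions
∀x(p(x) ↔ ⋁ᵢ ∃yⁱ (x = tⁱ ∧ Gⁱ)) of all predicate constants p of Pr. -/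
def Interp.satComp (I : Interp σ) (Pr : List (Rule σ)) : Prop :=
  ∀ A : GAtom σ I.U, A.1 ∈ progPreds Pr →
    (I.rel A ↔ ∃ R ∈ Pr, ∃ v : ℕ → I.U, R.headEval I v = A ∧ R.body.Sat I v)

/- ## The operator SM -/

/-- Satisfaction of the Ferraris–Lee–Lifschitz transform F*(u), where `u`
reinterprets the intensional predicates `ints`. -/
def Fml.SatStar (I : Interp σ) (ints : Set σ.Pred) (u : GAtom σ I.U → Prop)
    (v : ℕ → I.U) : Fml σ → Prop
  | .falsum => False
  | .atom p ts =>
      (p ∈ ints ∧ u ⟨p, fun i => (ts i).eval I v⟩) ∨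
      (p ∉ ints ∧ I.rel ⟨p, fun i => (ts i).eval I v⟩)
  | .eq t₁ t₂ => t₁.eval I v = t₂.eval I v
  | .and F G => F.SatStar I ints u v ∧ G.SatStar I ints u v
  | .or F G => F.SatStar I ints u v ∨ G.SatStar I ints u v
  | .imp F G => (F.SatStar I ints u v → G.SatStar I ints u v) ∧ (F.Sat I v → G.Sat I v)
  | .all n F => ∀ d : I.U, F.SatStar I ints u (Function.update v n d)
  | .ex n F => ∃ d : I.U, F.SatStar I ints u (Function.update v n d)

/-- u < p : on the intensional predicates, `u` is contained in the relations of
`I` and is not equal to them. -/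
def predLt (I : Interp σ) (ints : Set σ.Pred) (u : GAtom σ I.U → Prop) : Prop :=
  (∀ A : GAtom σ I.U, A.1 ∈ ints → u A → I.rel A) ∧
  ¬ (∀ A : GAtom σ I.U, A.1 ∈ ints → (u A ↔ I.rel A))

/-- `I` satisfies SM[Pr] (with intensional predicates `ints`), for a
Lloyd-Topor program Pr. -/
def Interp.satSM (I : Interp σ) (ints : Set σ.Pred) (Pr : List (Rule σ)) : Prop :=
  I.satProg Pr ∧
  ¬ ∃ u : GAtom σ I.U → Prop, predLt I ints u ∧
      ∀ R ∈ Pr, ∀ v : ℕ → I.U, R.fml.SatStar I ints u v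

/-- The predicate symbols occurring in a set of sentences. -/
def fmlSetPreds (Fs : Set (Fml σ)) : Set σ.Pred := {p | ∃ F ∈ Fs, F.hasPred p}

/-- `I` satisfies SM[F] (with intensional predicates `ints`) where `F` is the
conjunction of the universal closures of the members of `Fs`. -/
def Interp.satSMSet (I : Interp σ) (ints : Set σ.Pred) (Fs : Set (Fml σ)) : Prop :=
  I.satAll Fs ∧
  ¬ ∃ u : GAtom σ I.U → Prop, predLt I ints u ∧
      ∀ F ∈ Fs, ∀ v : ℕ → I.U, F.SatStar I ints u v

/- ## Predicate dependency graph and tightness -/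

mutual
  /-- Predicates with a positive nonnegated occurrence. -/
  def Fml.pnn : Fml σ → Set σ.Pred
    | .falsum => ∅
    | .atom p _ => {p}
    | .eq _ _ => ∅
    | .and F G => F.pnn ∪ G.pnn
    | .or F G => F.pnn ∪ G.pnn
    | .imp _ .falsum => ∅
    | .imp F G => F.nnn ∪ G.pnn
    | .all _ F => F.pnn
    | .ex _ F => F.pnn
  /-- Predicates with a negative nonnegated occurrence. -/
  def Fml.nnn : Fml σ → Set σ.Pred
    | .falsum => ∅
    | .atom _ _ => ∅
    | .eq _ _ => ∅
    | .and F G => F.nnn ∪ G.nnn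
    | .or F G => F.nnn ∪ G.nnn
    | .imp _ .falsum => ∅
    | .imp F G => F.pnn ∪ G.nnn
    | .all _ F => F.nnn
    | .ex _ F => F.nnn
end

/-- Edge of the predicate dependency graph of Pr. -/
def depEdge (Pr : List (Rule σ)) (p q : σ.Pred) : Prop :=
  ∃ R ∈ Pr, R.head = p ∧ q ∈ R.body.pnn

/-- Pr is tight: its predicate dependency graph is acyclic. -/
def Tight (Pr : List (Rule σ)) : Prop :=
  ∀ p : σ.Pred, ¬ Relation.TransGen (depEdge Pr) p p

/- ## Rule dependency graph, chains -/

/-- Renaming of variables in a term. -/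
def Term.rename (ρ : ℕ → ℕ) : Term σ → Term σ
  | .var n => .var (ρ n)
  | .func f ts => .func f fun i => (ts i).rename ρ

/-- Renaming of variables (free and bound) in a formula. -/
def Fml.rename (ρ : ℕ → ℕ) : Fml σ → Fml σ
  | .falsum => .falsum
  | .atom p ts => .atom p fun i => (ts i).rename ρ
  | .eq t₁ t₂ => .eq (t₁.rename ρ) (t₂.rename ρ)
  | .and F G => .and (F.rename ρ) (G.rename ρ)
  | .or F G => .or (F.rename ρ) (G.rename ρ)
  | .imp F G => .imp (F.rename ρ) (G.rename ρ)
  | .all n F => .all (ρ n) (F.rename ρ)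
  | .ex n F => .ex (ρ n) (F.rename ρ)

/-- Renaming of variables in a rule. -/
def Rule.rename (ρ : ℕ → ℕ) (R : Rule σ) : Rule σ :=
  ⟨R.head, fun i => (R.args i).rename ρ, R.body.rename ρ⟩

/-- Vertices of the rule dependency graph of Pr: rules of Pr with variables
(both free and bound) renamed arbitrarily. -/
def isVariant (Pr : List (Rule σ)) (R' : Rule σ) : Prop :=
  ∃ R ∈ Pr, ∃ ρ : ℕ → ℕ, Function.Injective ρ ∧ R' = R.rename ρ

/-- A (syntactic) atomic formula p(s). -/
abbrev TAtom (σ : Signature) := Σ p : σ.Pred, Fin (σ.prArity p) → Term σ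

mutual
  /-- Atomic formulas with a positive nonnegated occurrence. -/
  def Fml.pnnAtoms : Fml σ → Set (TAtom σ)
    | .falsum => ∅
    | .atom p ts => {⟨p, ts⟩}
    | .eq _ _ => ∅
    | .and F G => F.pnnAtoms ∪ G.pnnAtoms
    | .or F G => F.pnnAtoms ∪ G.pnnAtoms
    | .imp _ .falsum => ∅
    | .imp F G => F.nnnAtoms ∪ G.pnnAtoms
    | .all _ F => F.pnnAtoms
    | .ex _ F => F.pnnAtoms
  /-- Atomic formulas with a negative nonnegated occurrence. -/
  def Fml.nnnAtoms : Fml σ → Set (TAtom σ)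
    | .falsum => ∅
    | .atom _ _ => ∅
    | .eq _ _ => ∅
    | .and F G => F.nnnAtoms ∪ G.nnnAtoms
    | .or F G => F.nnnAtoms ∪ G.nnnAtoms
    | .imp _ .falsum => ∅
    | .imp F G => F.pnnAtoms ∪ G.nnnAtoms
    | .all _ F => F.nnnAtoms
    | .ex _ F => F.nnnAtoms
end

/-- Candidate path of length `n` in the rule dependency graph: rules
R₀,...,Rₙ and edge labels A₁,...,Aₙ. -/
structure RdgPath (σ : Signature) (n : ℕ) where
  rules : Fin (n + 1) → Rule σ
  labels : Fin n → TAtom σ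

/-- `C` is a path of length `n` in the rule dependency graph of Pr: all of its
rules are variants of rules of Pr, and for each i the labelled atom p'(s) has a
positive nonnegated occurrence in the body of the source rule and p' is the
head predicate of the target rule. -/
def RdgPath.valid {n : ℕ} (C : RdgPath σ n) (Pr : List (Rule σ)) : Prop :=
  (∀ i, isVariant Pr (C.rules i)) ∧
  ∀ i : Fin n,
    C.labels i ∈ (C.rules i.castSucc).body.pnnAtoms ∧
    (C.rules i.succ).head = (C.labels i).1

/-- Variables (free and bound) of a term. -/
def Term.vars : Term σ → Set ℕ
  | .var n => {n}
  | .func _ ts => ⋃ i, (ts i).vars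

/-- Variables (free and bound) of a formula. -/
def Fml.vars : Fml σ → Set ℕ
  | .falsum => ∅
  | .atom _ ts => ⋃ i, (ts i).vars
  | .eq t₁ t₂ => t₁.vars ∪ t₂.vars
  | .and F G => F.vars ∪ G.vars
  | .or F G => F.vars ∪ G.vars
  | .imp F G => F.vars ∪ G.vars
  | .all n F => insert n F.vars
  | .ex n F => insert n F.vars

/-- Variables (free and bound) of a rule. -/
def Rule.vars (R : Rule σ) : Set ℕ := (⋃ i, (R.args i).vars) ∪ R.body.vars

/-- A chain: a path in the rule dependency graph whose rules pairwise have no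
common variables. -/
def RdgPath.isChain {n : ℕ} (C : RdgPath σ n) (Pr : List (Rule σ)) : Prop :=
  C.valid Pr ∧ ∀ i j, i ≠ j → Disjoint (C.rules i).vars (C.rules j).vars

/-- Satisfaction of the chain formula
F_C = ⋀_{i=1}^n (sⁱ = tⁱ) ∧ ⋀_{i=0}^n Bodyᵢ. -/
def RdgPath.satChainFml {n : ℕ} (C : RdgPath σ n) (I : Interp σ) (v : ℕ → I.U) : Prop :=
  (∀ i : Fin n,
    (⟨(C.labels i).1, fun j => ((C.labels i).2 j).eval I v⟩ : GAtom σ I.U) =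
      (C.rules i.succ).headEval I v) ∧
  ∀ i : Fin (n + 1), (C.rules i).body.Sat I v

/-- Pr is Γ-tight: for some positive n, for every chain C of length n,
Γ together with Comp[Pr] entails the universal closure of ¬F_C. -/
def GammaTight (Γ : Set (Fml σ)) (Pr : List (Rule σ)) : Prop :=
  ∃ n : ℕ, 0 < n ∧ ∀ C : RdgPath σ n, C.isChain Pr →
    ∀ I : Interp σ, I.satAll Γ → I.satComp Pr → ∀ v : ℕ → I.U, ¬ C.satChainFml I v

/- ## Infinitary propositional formulas -/

/-- Infinitary propositional formulas over a set `α` of atoms, with arbitrary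
(indexed) conjunctions and disjunctions. -/
inductive IFml (α : Type) : Type 1
  | atom : α → IFml α
  | falsum : IFml α
  | conj {ι : Type} (f : ι → IFml α) : IFml α
  | disj {ι : Type} (f : ι → IFml α) : IFml α
  | imp (F G : IFml α) : IFml α

variable {α : Type}

/-- Satisfaction of an infinitary formula by a propositional interpretation
(a set of atoms). -/
def IFml.ISat (J : Set α) : IFml α → Prop
  | .atom a => a ∈ J
  | .falsum => False
  | .conj f => ∀ i, (f i).ISat J
  | .disj f => ∃ i, (f i).ISat J
  | .imp F G => F.ISat J → G.ISat J

attribute [local instance] Classical.propDecidable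

/-- The reduct F^J of an infinitary formula. -/
noncomputable def IFml.reduct (J : Set α) : IFml α → IFml α
  | .atom a => if a ∈ J then .atom a else .falsum
  | .falsum => .falsum
  | .conj f => if (IFml.conj f).ISat J then .conj (fun i => (f i).reduct J) else .falsum
  | .disj f => if (IFml.disj f).ISat J then .disj (fun i => (f i).reduct J) else .falsum
  | .imp F G => if (IFml.imp F G).ISat J then .imp (F.reduct J) (G.reduct J) else .falsum

/-- `J` is a stable model of `F`: `J` is a minimal model of the reduct F^J. -/
def IFml.isStableModel (J : Set α) (F : IFml α) : Prop :=
  (F.reduct J).ISat J ∧ ∀ K : Set α, K ⊆ J → (F.reduct J).ISat K → K = J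

/-- An infinitary program: an (indexed) collection of rules A ← G with
A an atom and G an infinitary formula. -/
structure IProg (α : Type) where
  idx : Type
  head : idx → α
  body : idx → IFml α

/-- The infinitary program as an infinitary formula: the conjunction of the
implications G → A over all its rules A ← G. -/
def IProg.fml (P : IProg α) : IFml α := .conj fun i => (P.body i).imp (.atom (P.head i))

/-- `J` is supported by `P`: every atom of `J` is the head of a rule whose
body is satisfied by `J`. -/
def IProg.supported (P : IProg α) (J : Set α) : Prop :=
  ∀ a ∈ J, ∃ i, P.head i = a ∧ (P.body i).ISat J

mutual
  /-- Positive nonnegated atoms of an infinitary formula. -/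
  def IFml.Pnn : IFml α → Set α
    | .atom a => {a}
    | .falsum => ∅
    | .conj f => ⋃ i, (f i).Pnn
    | .disj f => ⋃ i, (f i).Pnn
    | .imp _ .falsum => ∅
    | .imp F G => F.Nnn ∪ G.Pnn
  /-- Negative nonnegated atoms of an infinitary formula. -/
  def IFml.Nnn : IFml α → Set α
    | .atom _ => ∅
    | .falsum => ∅
    | .conj f => ⋃ i, (f i).Nnn
    | .disj f => ⋃ i, (f i).Nnn
    | .imp _ .falsum => ∅
    | .imp F G => F.Pnn ∪ G.Nnn
end

/-- `a'` is a parent of `a` relative to `P` and `J`. -/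
def IProg.parent (P : IProg α) (J : Set α) (a' a : α) : Prop :=
  a ∈ J ∧ a' ∈ J ∧ ∃ i, P.head i = a ∧ (P.body i).ISat J ∧ a' ∈ (P.body i).Pnn

/-- `P` is tight on `J`: there is no infinite sequence A₀, A₁, ... of elements
of `J` in which each A_{i+1} is a parent of A_i. -/
def IProg.tightOn (P : IProg α) (J : Set α) : Prop :=
  ¬ ∃ A : ℕ → α, (∀ n, A n ∈ J) ∧ ∀ n, P.parent J (A (n + 1)) (A n)

/- ## Grounding -/

/-- The grounding gr_I(F) of a first-order formula relative to an
interpretation `I` (and an assignment `v` for the free variables). -/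
noncomputable def Fml.ground (I : Interp σ) (v : ℕ → I.U) : Fml σ → IFml (GAtom σ I.U)
  | .falsum => .falsum
  | .atom p ts => .atom ⟨p, fun i => (ts i).eval I v⟩
  | .eq t₁ t₂ => if t₁.eval I v = t₂.eval I v then .imp .falsum .falsum else .falsum
  | .and F G => .conj fun b : Bool => cond b (F.ground I v) (G.ground I v)
  | .or F G => .disj fun b : Bool => cond b (F.ground I v) (G.ground I v)
  | .imp F G => .imp (F.ground I v) (G.ground I v)
  | .all n F => .conj fun d : I.U => F.ground I (Function.update v n d)
  | .ex n F => .disj fun d : I.U => F.ground I (Function.update v n d)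

/-- I^r : the set of ground atoms satisfied by `I`. -/
def Interp.ir (I : Interp σ) : Set (GAtom σ I.U) := {A | I.rel A}

/-- The infinitary program gr_I(Pr) obtained by grounding a Lloyd-Topor
program: one ground rule for every rule of Pr and every assignment. -/
noncomputable def groundProg (I : Interp σ) (Pr : List (Rule σ)) : IProg (GAtom σ I.U) where
  idx := {R : Rule σ // R ∈ Pr} × (ℕ → I.U)
  head := fun x => (x.1.1).headEval I x.2
  body := fun x => (x.1.1).body.ground I x.2

/-- Free variables of a formula. -/
def Fml.freeVars : Fml σ → Set ℕ
  | .falsum => ∅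
  | .atom _ ts => ⋃ i, (ts i).vars
  | .eq t₁ t₂ => t₁.vars ∪ t₂.vars
  | .and F G => F.freeVars ∪ G.freeVars
  | .or F G => F.freeVars ∪ G.freeVars
  | .imp F G => F.freeVars ∪ G.freeVars
  | .all n F => F.freeVars \ {n}
  | .ex n F => F.freeVars \ {n}

/- ## Auxiliary lemmas for Proposition 1 -/

section Aux

variable {σ : Signature}

lemma satStar_imp_sat {I : Interp σ} {ints : Set σ.Pred} {u : GAtom σ I.U → Prop}
    (hu : ∀ A : GAtom σ I.U, A.1 ∈ ints → u A → I.rel A) :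
    ∀ (F : Fml σ) (v : ℕ → I.U), F.SatStar I ints u v → F.Sat I v := by
  intro F
  induction F with
  | falsum => exact fun v h => h
  | atom p ts => exact fun v h => h.elim (fun h => hu _ h.1 h.2) And.right
  | eq t₁ t₂ => exact fun v h => h
  | and F G ihF ihG => exact fun v h => ⟨ihF v h.1, ihG v h.2⟩
  | or F G ihF ihG => exact fun v h => h.imp (ihF v) (ihG v)
  | imp F G ihF ihG => exact fun v h => h.2
  | all n F ih => exact fun v h d => ih _ (h d)
  | ex n F ih => exact fun v h => h.imp (fun d hd => ih _ hd)

lemma pnn_imp_right (F G : Fml σ) : G.pnn ⊆ (F.imp G).pnn := by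
  cases G <;> simp [Fml.pnn]

lemma pnn_lemma {I : Interp σ} {ints : Set σ.Pred} {u : GAtom σ I.U → Prop}
    (hu : ∀ A : GAtom σ I.U, A.1 ∈ ints → u A → I.rel A) :
    ∀ (F : Fml σ) (v : ℕ → I.U), F.Sat I v → ¬ F.SatStar I ints u v →
      ∃ B : GAtom σ I.U, B.1 ∈ F.pnn ∧ B.1 ∈ ints ∧ I.rel B ∧ ¬ u B := by
  intro F
  induction F with
  | falsum => exact fun v hs _ => hs.elim
  | atom p ts =>
      intro v hs hns
      refine ⟨⟨p, fun i => (ts i).eval I v⟩, rfl, ?_, hs, ?_⟩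
      · by_contra hpi
        exact hns (Or.inr ⟨hpi, hs⟩)
      · intro hua
        by_cases hpi : p ∈ ints
        · exact hns (Or.inl ⟨hpi, hua⟩)
        · exact hns (Or.inr ⟨hpi, hs⟩)
  | eq t₁ t₂ => exact fun v hs hns => (hns hs).elim
  | and F G ihF ihG =>
      intro v hs hns
      by_cases hF : F.SatStar I ints u v
      · obtain ⟨B, hB, h2, h3, h4⟩ := ihG v hs.2 (fun hG => hns ⟨hF, hG⟩)
        exact ⟨B, Or.inr hB, h2, h3, h4⟩
      · obtain ⟨B, hB, h2, h3, h4⟩ := ihF v hs.1 hF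
        exact ⟨B, Or.inl hB, h2, h3, h4⟩
  | or F G ihF ihG =>
      intro v hs hns
      rcases hs with hs | hs
      · obtain ⟨B, hB, h2, h3, h4⟩ := ihF v hs (fun hF => hns (Or.inl hF))
        exact ⟨B, Or.inl hB, h2, h3, h4⟩
      · obtain ⟨B, hB, h2, h3, h4⟩ := ihG v hs (fun hG => hns (Or.inr hG))
        exact ⟨B, Or.inr hB, h2, h3, h4⟩
  | imp F G ihF ihG =>
      intro v hs hns
      by_cases hGs : G.Sat I v
      · obtain ⟨B, hB, h2, h3, h4⟩ := ihG v hGs (fun hG => hns ⟨fun _ => hG, hs⟩)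
        exact ⟨B, pnn_imp_right F G hB, h2, h3, h4⟩
      · have hFs : ¬ F.Sat I v := fun h => hGs (hs h)
        exact (hns ⟨fun hf => (hFs (satStar_imp_sat hu F v hf)).elim, hs⟩).elim
  | all n F ih =>
      intro v hs hns
      have hns' : ¬ ∀ d : I.U, F.SatStar I ints u (Function.update v n d) := hns
      obtain ⟨d, hd⟩ := not_forall.mp hns' 
      obtain ⟨B, hB, h2, h3, h4⟩ := ih (Function.update v n d) (hs d) hd
      exact ⟨B, hB, h2, h3, h4⟩
  | ex n F ih =>
      intro v hs hns
      have hns' : ¬ ∃ d : I.U, F.SatStar I ints u (Function.update v n d) := hns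
      obtain ⟨d, hd⟩ := hs
      obtain ⟨B, hB, h2, h3, h4⟩ := ih (Function.update v n d) hd (fun hc => hns' ⟨d, hc⟩)
      exact ⟨B, hB, h2, h3, h4⟩

lemma head_mem_progPreds {Pr : List (Rule σ)} {R : Rule σ} (hR : R ∈ Pr) :
    R.head ∈ progPreds Pr :=
  ⟨R, hR, Or.inr rfl⟩

lemma chain_transGen {α : Type*} {r : α → α → Prop} (f : ℕ → α)
    (h : ∀ n, r (f n) (f (n + 1))) : ∀ m n, m < n → Relation.TransGen r (f m) (f n) := by
  intro m n hmn
  induction n with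
  | zero => omega
  | succ k ih =>
      rcases Nat.lt_succ_iff_lt_or_eq.mp hmn with h' | h'
      · exact (ih h').tail (h k)
      · subst h'; exact Relation.TransGen.single (h m)

end Aux

/-- **Proposition 1.** If a Lloyd-Topor program is tight then SM[Pr] is
equivalent to Comp[Pr]. -/
theorem proposition1 {σ : Signature} (Pr : List (Rule σ)) (h : Tight Pr) (I : Interp σ) :
    I.satSM (progPreds Pr) Pr ↔ I.satComp Pr := by
  constructor
  · rintro ⟨hprog, hnex⟩
    intro A hA
    constructor
    · intro hrel
      by_contra hsup
      apply hnex
      refine ⟨fun B => I.rel B ∧ B ≠ A, ⟨fun B _ hB => hB.1, ?_⟩, ?_⟩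
      · intro hall
        exact ((hall A hA).mpr hrel).2 rfl
      · intro R hR v
        have hsat : R.fml.Sat I v := hprog R hR v
        refine ⟨?_, hsat⟩
        intro hbstar
        have hbsat : R.body.Sat I v :=
          satStar_imp_sat (fun B _ hB => hB.1) R.body v hbstar
        have hrelh : I.rel (R.headEval I v) := hsat hbsat
        left
        refine ⟨head_mem_progPreds hR, hrelh, ?_⟩
        intro heq
        exact hsup ⟨R, hR, v, heq, hbsat⟩
    · rintro ⟨R, hR, v, heq, hbody⟩
      have hrel : I.rel (R.headEval I v) := hprog R hR v hbody
      rwa [heq] at hrel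
  · intro hcomp
    constructor
    · intro R hR v hbody
      exact (hcomp (R.headEval I v) (head_mem_progPreds hR)).mpr ⟨R, hR, v, rfl, hbody⟩
    · rintro ⟨u, ⟨hle, hne⟩, hstar⟩
      classical
      have hA0 : ∃ A : GAtom σ I.U, A.1 ∈ progPreds Pr ∧ I.rel A ∧ ¬ u A := by
        by_contra hno
        push_neg at hno
        apply hne
        intro B hB
        refine ⟨hle B hB, fun hrel => ?_⟩
        by_contra hub
        exact hub (hno B hB hrel)
      have step : ∀ B : GAtom σ I.U, (B.1 ∈ progPreds Pr ∧ I.rel B ∧ ¬ u B) →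
          ∃ B' : GAtom σ I.U, (B'.1 ∈ progPreds Pr ∧ I.rel B' ∧ ¬ u B') ∧
            ∃ R, R ∈ Pr ∧ R.head = B.1 ∧ B'.1 ∈ R.body.pnn := by
        rintro B ⟨hBi, hBrel, hBu⟩
        obtain ⟨R, hR, v, heq, hbody⟩ := (hcomp B hBi).mp hBrel
        have hhead : R.head = B.1 := congrArg Sigma.fst heq
        have hnstar : ¬ R.body.SatStar I (progPreds Pr) u v := by
          intro hbs
          have h1 := (hstar R hR v).1 hbs
          rcases h1 with ⟨_, hu'⟩ | ⟨hni, _⟩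
          · have hu'' : u (R.headEval I v) := hu'
            rw [heq] at hu''
            exact hBu hu''
          · exact hni (head_mem_progPreds hR)
        obtain ⟨B', hB'pnn, h2, h3, h4⟩ := pnn_lemma hle R.body v hbody hnstar
        exact ⟨B', ⟨h2, h3, h4⟩, R, hR, hhead, hB'pnn⟩
      choose f hf g hg hgh hgp using step
      obtain ⟨A0, hA0⟩ := hA0
      let seq : ℕ → {B : GAtom σ I.U // B.1 ∈ progPreds Pr ∧ I.rel B ∧ ¬ u B} :=
        fun n => Nat.rec ⟨A0, hA0⟩ (fun _ p => ⟨f p.1 p.2, hf p.1 p.2⟩) n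
      have hedge : ∀ n, depEdge Pr (seq n).1.1 (seq (n + 1)).1.1 := by
        intro n
        exact ⟨g (seq n).1 (seq n).2, hg _ _, hgh _ _, hgp _ _⟩
      have hfin : Finite {R : Rule σ // R ∈ Pr} := Pr.finite_toSet.to_subtype
      obtain ⟨m, n, hmn, heq'⟩ := Finite.exists_ne_map_eq_of_infinite
        (fun k => (⟨g (seq k).1 (seq k).2, hg _ _⟩ : {R : Rule σ // R ∈ Pr}))
      have hpq : (seq m).1.1 = (seq n).1.1 := by
        have h1 := hgh (seq m).1 (seq m).2
        have h2 := hgh (seq n).1 (seq n).2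
        have h3 := congrArg (fun x : {R : Rule σ // R ∈ Pr} => x.val.head) heq'
        simp only at h3
        rw [h1, h2] at h3
        exact h3
      have key : ∀ a b : ℕ, a < b → (seq a).1.1 = (seq b).1.1 → False := by
        intro a b hlt he
        have ht : Relation.TransGen (depEdge Pr) (seq a).1.1 (seq b).1.1 :=
          chain_transGen (fun k => (seq k).1.1) hedge a b hlt
        rw [← he] at ht
        exact h _ ht
      rcases hmn.lt_or_gt with h' | h'
      · exact key m n h' hpq
      · exact key n m h' hpq.symm


end LT
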